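/- arXiv:2001.01814 — 3 statements merged into one kernel-verified Lean document; each statement's English description precedes it below -/
import Mathlib

section
/- Let k be a finite field of characteristic 2 and let G be a subgroup of GL₂(k) whose natural action on k² is irreducible (there is no nonzero proper G-stable k-subspace) but not absolutely irreducible (after extending scalars to an algebraic closure k̄, the action of G on k̄² has a nonzero proper G-stable subspace). Then G is cyclic of odd order. -/
/-!
A `G`-stable line `K ∙ v` over `K = k̄` gives a character `χ : G →* K`. Its kernel `N` fixes `v`,
and since linear independence is insensitive to base change, a finite family of `k`-matrices with
a common nonzero fixed vector over `K` has one over `k`; so the `N`-invariants in `k²` are nonzero.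
They are `G`-stable because `N` is normal, hence all of `k²` by irreducibility, so `N = 1` and `χ`
embeds `G` into `Kˣ`, making it cyclic. In characteristic 2, `x ^ 2 = 1` forces `x = 1`, so `G` has
no element of order 2 and its order is odd.
-/

open Matrix

open Module in
theorem Submodule.finrank_eq_one_of_ne_bot_of_ne_top {K V : Type*} [Field K] [AddCommGroup V]
    [Module K V] (hV : finrank K V = 2) {W : Submodule K V} (hW₀ : W ≠ ⊥) (hW : W ≠ ⊤) :
    finrank K W = 1 := by
  have : FiniteDimensional K V := Module.finite_of_finrank_eq_succ hV
  have := Submodule.finrank_lt hW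
  have := Submodule.finrank_eq_zero.not.mpr hW₀
  omega

theorem Matrix.mulVec_injective_map_iff {m n R S : Type*} [Finite m] [Fintype n] [CommRing R]
    [CommRing S] [Algebra R S] [FaithfulSMul R S] [IsDomain S] (M : Matrix m n R) :
    Function.Injective (M.map (algebraMap R S)).mulVec ↔ Function.Injective M.mulVec := by
  rw [mulVec_injective_iff, mulVec_injective_iff]
  exact linearIndependent_algebraMap_comp_iff

theorem Matrix.exists_forall_mulVec_eq_self_of_map {ι n k K : Type*} [Finite ι] [Fintype n]
    [DecidableEq n] [Field k] [Field K] [Algebra k K] (A : ι → Matrix n n k) {v : n → K}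
    (hv : v ≠ 0) (hfix : ∀ i, (A i).map (algebraMap k K) *ᵥ v = v) :
    ∃ w ≠ 0, ∀ i, A i *ᵥ w = w := by
  let M : Matrix (ι × n) n k := Matrix.of fun p => (A p.1 - 1) p.2
  have hM : ∀ w, M *ᵥ w = 0 ↔ ∀ i, A i *ᵥ w = w := fun w => by
    rw [funext_iff]
    change (∀ p : ι × n, ((A p.1 - 1) *ᵥ w) p.2 = 0) ↔ _
    simp only [Prod.forall, sub_mulVec, one_mulVec, Pi.sub_apply, sub_eq_zero, funext_iff]
  have hMK : M.map (algebraMap k K) *ᵥ v = 0 := funext fun p => by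
    change (((A p.1 - 1).map (algebraMap k K)) *ᵥ v) p.2 = 0
    rw [Matrix.map_sub _ (map_sub _), Matrix.map_one _ (map_zero _) (map_one _), sub_mulVec,
      one_mulVec, hfix, sub_self, Pi.zero_apply]
  by_contra! h
  have hinj : Function.Injective M.mulVec := (injective_iff_map_eq_zero M.mulVecLin).2 fun w hw =>
    by_contra fun hw0 => (h w hw0).elim fun i hi => hi ((hM w).1 hw i)
  exact hv ((M.mulVec_injective_map_iff (S := K)).2 hinj (hMK.trans (mulVec_zero _).symm))

namespace Representation

variable {K G V : Type*} [Field K] [Group G] [AddCommGroup V] [Module K V]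
  (ρ : Representation K G V) {v : V}

noncomputable def lineCharacter (hv₀ : v ≠ 0) (hv : ∀ g, ρ g v ∈ K ∙ v) : G →* K where
  toFun g := (Submodule.mem_span_singleton.1 (hv g)).choose
  map_one' := smul_left_injective K hv₀ <| by
    simpa using (Submodule.mem_span_singleton.1 (hv 1)).choose_spec
  map_mul' g h := smul_left_injective K hv₀ <| by
    beta_reduce
    rw [(Submodule.mem_span_singleton.1 (hv (g * h))).choose_spec, mul_comm, mul_smul,
      (Submodule.mem_span_singleton.1 (hv g)).choose_spec, ← map_smul,
      (Submodule.mem_span_singleton.1 (hv h)).choose_spec, map_mul, Module.End.mul_apply]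

theorem lineCharacter_smul (hv₀ : v ≠ 0) (hv : ∀ g, ρ g v ∈ K ∙ v) (g : G) :
    ρ.lineCharacter hv₀ hv g • v = ρ g v :=
  (Submodule.mem_span_singleton.1 (hv g)).choose_spec

end Representation

namespace Matrix.GeneralLinearGroup

variable {n R : Type*} [Fintype n] [DecidableEq n] [CommRing R]

noncomputable def naturalRep (S : Type*) [CommRing S] [Algebra R S] (G : Subgroup (GL n R)) :
    Representation S G (n → S) where
  toFun g := (((g : GL n R) : Matrix n n R).map (algebraMap R S)).mulVecLin
  map_one' := by simp [Module.End.one_eq_id]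
  map_mul' g h := by simp [Module.End.mul_eq_comp]

theorem eq_bot_of_invariants_naturalRep_ne_bot {G : Subgroup (GL n R)}
    (hirr : ∀ W : Submodule R (n → R),
      (∀ g ∈ G, ∀ w ∈ W, (g : Matrix n n R) *ᵥ w ∈ W) → W = ⊥ ∨ W = ⊤)
    (N : Subgroup G) [N.Normal]
    (hN : Representation.invariants ((naturalRep R G).comp N.subtype) ≠ ⊥) : N = ⊥ := by
  have htop : Representation.invariants ((naturalRep R G).comp N.subtype) = ⊤ :=
    (hirr _ fun g hg w hw => (naturalRep R G).le_comap_invariants N ⟨g, hg⟩ hw).resolve_left hN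
  refine (Subgroup.eq_bot_iff_forall N).2 fun h hh => ?_
  have hfix : ∀ x, ((h : GL n R) : Matrix n n R) *ᵥ x = x := fun x =>
    Submodule.eq_top_iff'.1 htop x ⟨h, hh⟩
  have : ((h : GL n R) : Matrix n n R) = 1 :=
    _root_.Matrix.toLin'.injective (LinearMap.ext fun x => by simp [hfix])
  exact Subtype.ext (Units.ext this)

theorem invariants_naturalRep_ne_bot_of_baseChange {k K : Type*} [Field k] [Field K] [Algebra k K]
    {G : Subgroup (GL n k)} (N : Subgroup G) [Finite N]
    (hN : Representation.invariants ((naturalRep K G).comp N.subtype) ≠ ⊥) :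
    Representation.invariants ((naturalRep k G).comp N.subtype) ≠ ⊥ := by
  obtain ⟨v, hv, hv₀⟩ := Submodule.exists_mem_ne_zero_of_ne_bot hN
  obtain ⟨w, hw₀, hw⟩ :=
    exists_forall_mulVec_eq_self_of_map (fun h : N => (((h : G) : GL n k) : Matrix n n k)) hv₀ hv
  exact fun hbot => hw₀ ((Submodule.mem_bot k).1 (hbot ▸ hw))

end Matrix.GeneralLinearGroup

theorem odd_card_of_injective_charTwo {G R : Type*} [Group G] [Finite G] [CommRing R] [CharP R 2]
    [NoZeroDivisors R] (f : G →* R) (hf : Function.Injective f) : Odd (Nat.card G) := by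
  by_contra hodd
  obtain ⟨g, hg⟩ := exists_prime_orderOf_dvd_card' 2 (Nat.not_odd_iff_even.1 hodd).two_dvd
  have hsq : f g ^ 2 = 1 ^ 2 := by rw [← map_pow, ← hg, pow_orderOf_eq_one, map_one, one_pow]
  have hg1 : g = 1 := hf (CharTwo.sq_injective hsq |>.trans f.map_one.symm)
  rw [hg1, orderOf_one] at hg
  exact absurd hg (by norm_num)

open Matrix.GeneralLinearGroup Representation

/-- If a subgroup `G ≤ GL₂(k)`, `k` a finite field of characteristic 2, acts irreducibly but
not absolutely irreducibly on `k²`, then `G` is cyclic of odd order. -/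
theorem irreducible_not_absolutely_irreducible_cyclic_odd
    (k : Type) [Field k] [Fintype k] [CharP k 2]
    (G : Subgroup (GL (Fin 2) k))
    (hirr : ∀ W : Submodule k (Fin 2 → k),
      (∀ g ∈ G, ∀ w ∈ W, Matrix.mulVec (g : Matrix (Fin 2) (Fin 2) k) w ∈ W) →
        W = ⊥ ∨ W = ⊤)
    (habs : ∃ W : Submodule (AlgebraicClosure k) (Fin 2 → AlgebraicClosure k),
      W ≠ ⊥ ∧ W ≠ ⊤ ∧
      ∀ g ∈ G, ∀ w ∈ W,
        Matrix.mulVec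
          ((g : Matrix (Fin 2) (Fin 2) k).map (algebraMap k (AlgebraicClosure k))) w ∈ W) :
    IsCyclic G ∧ Odd (Nat.card G) := by
  set K := AlgebraicClosure k
  obtain ⟨W, hW₀, hW, hWstab⟩ := habs
  obtain ⟨v, hvW, hv₀⟩ := W.exists_mem_ne_zero_of_ne_bot hW₀
  have hline : ∀ g, naturalRep K G g v ∈ K ∙ v := by
    rw [← eq_span_singleton_of_mem_of_finrank_eq_one
      (W.finrank_eq_one_of_ne_bot_of_ne_top (by simp) hW₀ hW) hvW hv₀]
    exact fun g => hWstab g g.2 v hvW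
  set χ := (naturalRep K G).lineCharacter hv₀ hline
  have hv_inv : v ∈ invariants ((naturalRep K G).comp χ.ker.subtype) := fun h => by
    change naturalRep K G h v = v
    rw [← lineCharacter_smul _ hv₀ hline, χ.mem_ker.1 h.2, one_smul]
  have hker : χ.ker = ⊥ := eq_bot_of_invariants_naturalRep_ne_bot hirr χ.ker <|
    invariants_naturalRep_ne_bot_of_baseChange χ.ker ((Submodule.ne_bot_iff _).2 ⟨v, hv_inv, hv₀⟩)
  have hχ : Function.Injective χ := (MonoidHom.ker_eq_bot_iff χ).1 hker
  exact ⟨isCyclic_of_injective_ringHom χ hχ, odd_card_of_injective_charTwo χ hχ⟩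
end

section
/- Let B be a commutative ring that is finite and free as a module over the 2-adic integers ℤ₂, let A ⊆ B be a ℤ₂-subalgebra, and let 𝔪 be a maximal ideal of A. Consider the space Λ of ℤ₂-module homomorphisms φ : B → F̄₂ (an algebraic closure of 𝔽₂) such that φ(𝔪^k · B) = 0 for some k ≥ 0, regarded as an F̄₂-vector space via the target. Then dim_{F̄₂} Λ = Σ_𝔞 dim_{𝔽₂}(B_𝔞 / 2B_𝔞), where the sum runs over the maximal ideals 𝔞 of B with 𝔞 ∩ A = 𝔪 and B_𝔞 denotes the localization of B at 𝔞. Equivalently, writing k_𝔞 = B/𝔞 for the (finite, characteristic 2) residue field at 𝔞, the summand equals [k_𝔞 : 𝔽₂] · dim_{k_𝔞}(B_𝔞/2B_𝔞). -/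
/-!
Every additive map `B → F̄₂` kills `2B`, and since `B/2B` is finite the ideals `2B + (𝔪B)^k`
stabilise at some `J = 2B + (𝔪B)^m`. Hence `Λ` is the `F̄₂`-dual of the finite `𝔽₂`-space `B/J`
and `dim Λ = log₂ |B/J|`. The Artinian ring `B/J` is the product of its localizations at its
maximal ideals, which are the maximal ideals `𝔞` of `B` over `𝔪`. In the Noetherian local ring
`B_𝔞` the ideal `P = 𝔪B_𝔞` lies in the maximal ideal and `P^m ⊆ 2B_𝔞 + P^(m+1)`, so Nakayama gives
`P^m ⊆ 2B_𝔞`; thus `(B/J)_𝔞 = B_𝔞/2B_𝔞`.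
-/

open IsLocalRing Module

section PTorsion

variable (p : ℕ) [Fact p.Prime]

theorem log_card_eq_finrank (W : Type*) [AddCommGroup W] [Module (ZMod p) W] [Finite W] :
    Nat.log p (Nat.card W) = finrank (ZMod p) W := by
  cases nonempty_fintype W
  rw [Nat.card_eq_fintype_card, Module.card_eq_pow_finrank (K := ZMod p), ZMod.card,
    Nat.log_pow (Fact.out : p.Prime).one_lt]

theorem log_card_pi_eq_sum {ι : Type*} [Fintype ι] (W : ι → Type*) [∀ i, AddCommGroup (W i)]
    [∀ i, Finite (W i)] (hW : ∀ i (x : W i), p • x = 0) :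
    Nat.log p (Nat.card (Π i, W i)) = ∑ i, Nat.log p (Nat.card (W i)) := by
  have := fun i => AddCommGroup.zmodModule (hW i)
  simp only [log_card_eq_finrank]
  exact Module.finrank_pi_fintype (ZMod p)

variable (K : Type*) [Field K] [Algebra (ZMod p) K]

theorem finrank_addMonoidHom_eq_finrank (W : Type*) [AddCommGroup W] [Module (ZMod p) W]
    [Module.Finite (ZMod p) W] :
    finrank K (W →+ K) = finrank (ZMod p) W :=
  let e : (W →+ K) ≃ₗ[K] (W →ₗ[ZMod p] K) :=
    { AddMonoidHom.toZModLinearMapEquiv p with map_smul' := fun _ _ => rfl }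
  e.finrank_eq.trans (Module.finrank_linearMap_self _ _ _)

theorem finrank_addMonoidHom_eq_log_card (W : Type*) [AddCommGroup W] [Finite W]
    (hW : ∀ x : W, p • x = 0) :
    finrank K (W →+ K) = Nat.log p (Nat.card W) := by
  have := AddCommGroup.zmodModule hW
  rw [finrank_addMonoidHom_eq_finrank p, log_card_eq_finrank p]

end PTorsion

theorem finrank_eq_finrank_addMonoidHom_quotient {K G M : Type*} [Semiring K] [AddCommGroup G]
    [AddCommGroup M] [Module K M] (H : AddSubgroup G) (Λ : Submodule K (G →+ M))
    (hΛ : ∀ φ, φ ∈ Λ ↔ H ≤ φ.ker) :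
    finrank K Λ = finrank K (G ⧸ H →+ M) :=
  LinearEquiv.finrank_eq
    { toFun φ := QuotientAddGroup.lift H φ ((hΛ φ).1 φ.2)
      invFun g := ⟨g.comp (QuotientAddGroup.mk' H), (hΛ _).2 fun x hx => by
        simp [(QuotientAddGroup.eq_zero_iff x).2 hx]⟩
      map_add' _ _ := by ext; rfl
      map_smul' _ _ := by ext; rfl
      left_inv _ := rfl
      right_inv g := by ext; rfl }

theorem finrank_eq_log_card_quotient (p : ℕ) [Fact p.Prime] (K : Type*) [Field K]
    [Algebra (ZMod p) K] {R : Type*} [CommRing R] (J : Ideal R) [Finite (R ⧸ J)]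
    (hp : (p : R ⧸ J) = 0) (Λ : Submodule K (R →+ K)) (hΛ : ∀ φ, φ ∈ Λ ↔ J.toAddSubgroup ≤ φ.ker) :
    finrank K Λ = Nat.log p (Nat.card (R ⧸ J)) :=
  (finrank_eq_finrank_addMonoidHom_quotient _ Λ hΛ).trans <|
    finrank_addMonoidHom_eq_log_card p K (R ⧸ J) fun x => by rw [nsmul_eq_mul, hp, zero_mul]

section Annihilation

variable {R M : Type*} [CommRing R] [AddCommGroup M]

theorem Ideal.map_toAddSubgroup_le_ker_iff {A : Type*} [CommRing A] (f : A →+* R) (I : Ideal A)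
    (φ : R →+ M) : (I.map f).toAddSubgroup ≤ φ.ker ↔ ∀ a ∈ I, ∀ b, φ (f a * b) = 0 := by
  refine ⟨fun h a ha b => h (Ideal.mul_mem_right b _ (Ideal.mem_map_of_mem f ha)),
    fun h x hx => ?_⟩
  suffices ∀ c, φ (x * c) = 0 by simpa using this 1
  induction hx using Submodule.span_induction with
  | mem _ hy =>
    obtain ⟨a, ha, rfl⟩ := hy
    exact h a ha
  | zero => simp
  | add _ _ _ _ hy hz => simp [add_mul, hy, hz]
  | smul b y _ hy =>
    intro c
    rw [smul_eq_mul, mul_comm b, mul_assoc]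
    exact hy _

theorem Ideal.span_natCast_toAddSubgroup_le_ker {n : ℕ} (hM : ∀ x : M, n • x = 0) (φ : R →+ M) :
    (Ideal.span {(n : R)}).toAddSubgroup ≤ φ.ker := fun x hx => by
  obtain ⟨c, rfl⟩ := Ideal.mem_span_singleton'.1 hx
  rw [AddMonoidHom.mem_ker, mul_comm, ← nsmul_eq_mul, map_nsmul, hM]

theorem exists_forall_pow_mul_eq_zero_iff {A : Type*} [CommRing A] (f : A →+* R)
    {I : Ideal R} {𝔪 : Ideal A} {m : ℕ} (hm : ∀ k, I ⊔ 𝔪.map f ^ m ≤ I ⊔ 𝔪.map f ^ k)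
    {φ : R →+ M} (hI : I.toAddSubgroup ≤ φ.ker) :
    (∃ k, ∀ a ∈ 𝔪 ^ k, ∀ b, φ (f a * b) = 0) ↔ (I ⊔ 𝔪.map f ^ m).toAddSubgroup ≤ φ.ker := by
  simp only [← Ideal.map_toAddSubgroup_le_ker_iff, Ideal.map_pow]
  refine ⟨fun ⟨k, hk⟩ => ?_, fun h => ⟨m, (Submodule.toAddSubgroup_mono le_sup_right).trans h⟩⟩
  refine (Submodule.toAddSubgroup_mono (hm k)).trans ?_
  rw [Submodule.sup_toAddSubgroup]
  exact sup_le hI hk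

end Annihilation

namespace Ideal

variable {R : Type*} [CommRing R] (I : Ideal R)

theorem exists_sup_pow_le_sup_pow [IsArtinianRing (R ⧸ I)] (P : Ideal R) :
    ∃ m, ∀ n ≥ m, ∀ k, I ⊔ P ^ n ≤ I ⊔ P ^ k := by
  obtain ⟨m, hm⟩ := IsArtinian.monotone_stabilizes (R := R ⧸ I)
    ⟨fun k => OrderDual.toDual (P.map (Quotient.mk I) ^ k), fun _ _ => pow_le_pow_right⟩
  refine ⟨m, fun n hn k => ?_⟩
  simp only [← comap_map_quotientMk, Ideal.map_pow]
  apply comap_mono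
  rcases le_total k n with hkn | hnk
  · exact pow_le_pow_right hkn
  · exact (congrArg OrderDual.ofDual ((hm n hn).symm.trans (hm k (hn.trans hnk)))).le

theorem isMaximal_map_quotientMk {𝔞 : Ideal R} (h𝔞 : 𝔞.IsMaximal) (hI : I ≤ 𝔞) :
    (𝔞.map (Quotient.mk I)).IsMaximal := by
  refine (map_eq_top_or_isMaximal_of_surjective _ Quotient.mk_surjective h𝔞).resolve_left
    fun htop => h𝔞.ne_top ?_
  rw [← comap_map_mk hI, htop, comap_top]

theorem map_le_iff_comap_eq_of_isMaximal {A : Type*} [CommRing A] (f : A →+* R) {𝔪 : Ideal A}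
    (h𝔪 : 𝔪.IsMaximal) {𝔞 : Ideal R} (h𝔞 : 𝔞 ≠ ⊤) :
    𝔪.map f ≤ 𝔞 ↔ 𝔞.comap f = 𝔪 := by
  rw [map_le_iff_le_comap]
  exact ⟨fun h => (h𝔪.eq_of_le (comap_ne_top f h𝔞) h).symm, fun h => h.ge⟩

theorem sup_map_pow_le_iff_comap_eq {A : Type*} [CommRing A] (f : A →+* R) {𝔪 : Ideal A}
    (h𝔪 : 𝔪.IsMaximal) {𝔞 : Ideal R} (h𝔞 : 𝔞.IsMaximal) (hI : I ≤ 𝔞) {m : ℕ} (hm : m ≠ 0) :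
    I ⊔ 𝔪.map f ^ m ≤ 𝔞 ↔ 𝔞.comap f = 𝔪 := by
  rw [sup_le_iff, h𝔞.isPrime.pow_le_iff hm, map_le_iff_comap_eq_of_isMaximal f h𝔪 h𝔞.ne_top,
    and_iff_right hI]

end Ideal

def MaximalSpectrum.quotientEquiv {R : Type*} [CommRing R] (I : Ideal R) :
    MaximalSpectrum (R ⧸ I) ≃ {𝔞 : Ideal R // 𝔞.IsMaximal ∧ I ≤ 𝔞} where
  toFun 𝔫 := ⟨𝔫.1.comap (Ideal.Quotient.mk I),
    Ideal.comap_isMaximal_of_surjective _ Ideal.Quotient.mk_surjective,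
    fun x hx => by simp [Ideal.Quotient.eq_zero_iff_mem.2 hx]⟩
  invFun 𝔞 := ⟨𝔞.1.map (Ideal.Quotient.mk I), I.isMaximal_map_quotientMk 𝔞.2.1 𝔞.2.2⟩
  left_inv 𝔫 :=
    MaximalSpectrum.ext (Ideal.map_comap_of_surjective _ Ideal.Quotient.mk_surjective _)
  right_inv 𝔞 := Subtype.ext (Ideal.comap_map_mk 𝔞.2.2)

theorem IsLocalRing.pow_le_of_le_sup_pow_succ {R : Type*} [CommRing R] [IsLocalRing R]
    [IsNoetherianRing R] {I P : Ideal R} (hP : P ≤ maximalIdeal R) {m : ℕ}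
    (h : P ^ m ≤ I ⊔ P ^ (m + 1)) : P ^ m ≤ I :=
  Submodule.le_of_le_smul_of_le_jacobson_bot (IsNoetherian.noetherian _)
    (jacobson_eq_maximalIdeal ⊥ bot_ne_top).ge
    (h.trans (sup_le_sup_left (by rw [pow_succ', smul_eq_mul]; exact Ideal.mul_mono_left hP) _))

namespace Localization.AtPrime

variable {R : Type*} [CommRing R]

theorem map_sup_pow_eq_map [IsNoetherianRing R] (𝔞 : Ideal R) [𝔞.IsPrime] {I P : Ideal R}
    (hP : P ≤ 𝔞) {m : ℕ} (h : P ^ m ≤ I ⊔ P ^ (m + 1)) :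
    (I ⊔ P ^ m).map (algebraMap R (Localization.AtPrime 𝔞)) =
      I.map (algebraMap R (Localization.AtPrime 𝔞)) := by
  refine le_antisymm ?_ (Ideal.map_mono le_sup_left)
  rw [Ideal.map_sup, Ideal.map_pow, sup_le_iff]
  refine ⟨le_rfl, IsLocalRing.pow_le_of_le_sup_pow_succ ?_ ?_⟩
  · rw [← Localization.AtPrime.map_eq_maximalIdeal]
    exact Ideal.map_mono hP
  · simpa only [Ideal.map_sup, Ideal.map_pow] using
      Ideal.map_mono (f := algebraMap R (Localization.AtPrime 𝔞)) h

noncomputable def quotientEquiv (I : Ideal R) (𝔮 : Ideal (R ⧸ I)) [𝔮.IsPrime] :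
    Localization.AtPrime 𝔮 ≃+*
      Localization.AtPrime (𝔮.comap (Ideal.Quotient.mk I)) ⧸
        I.map (algebraMap R (Localization.AtPrime (𝔮.comap (Ideal.Quotient.mk I)))) :=
  let S := Localization.AtPrime (𝔮.comap (Ideal.Quotient.mk I))
  have : IsLocalization 𝔮.primeCompl (S ⧸ I.map (algebraMap R S)) := by
    rw [← 𝔮.map_primeCompl_comap_of_surjective _ Ideal.Quotient.mk_surjective]
    exact (inferInstance : IsLocalization (Algebra.algebraMapSubmonoid (R ⧸ I)
      (𝔮.comap (Ideal.Quotient.mk I)).primeCompl) (S ⧸ I.map (algebraMap R S)))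
  (IsLocalization.algEquiv 𝔮.primeCompl _ _).toRingEquiv

noncomputable def quotientSupPowEquiv [IsNoetherianRing R] {I P : Ideal R} {m : ℕ}
    (h : P ^ m ≤ I ⊔ P ^ (m + 1)) (𝔮 : Ideal (R ⧸ (I ⊔ P ^ m))) [𝔮.IsPrime]
    (hP : P ≤ 𝔮.comap (Ideal.Quotient.mk _)) :
    Localization.AtPrime 𝔮 ≃+*
      Localization.AtPrime (𝔮.comap (Ideal.Quotient.mk _)) ⧸
        I.map (algebraMap R (Localization.AtPrime (𝔮.comap (Ideal.Quotient.mk _)))) :=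
  (quotientEquiv _ 𝔮).trans (Ideal.quotEquivOfEq (map_sup_pow_eq_map _ hP h))

end Localization.AtPrime

theorem log_card_eq_finsum_localization (p : ℕ) [Fact p.Prime] {R : Type*} [CommRing R]
    [Finite R] (hp : (p : R) = 0) :
    Nat.log p (Nat.card R) =
      ∑ᶠ 𝔫 : MaximalSpectrum R, Nat.log p (Nat.card (Localization.AtPrime 𝔫.asIdeal)) := by
  have : Fintype (MaximalSpectrum R) := Fintype.ofFinite _
  have hsurj (𝔫 : MaximalSpectrum R) := IsArtinianRing.localization_surjective
    𝔫.asIdeal.primeCompl (Localization.AtPrime 𝔫.asIdeal)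
  have (𝔫 : MaximalSpectrum R) : Finite (Localization.AtPrime 𝔫.asIdeal) :=
    Finite.of_surjective _ (hsurj 𝔫)
  rw [Nat.card_congr (MaximalSpectrum.toPiLocalizationEquiv R).toEquiv, finsum_eq_sum_of_fintype]
  refine log_card_pi_eq_sum p _ fun 𝔫 x => ?_
  obtain ⟨y, rfl⟩ := hsurj 𝔫 x
  rw [← map_nsmul, nsmul_eq_mul, hp, zero_mul, map_zero]

theorem finite_quotient_map {R B : Type*} [CommRing R] [CommRing B] [Algebra R B]
    [Module.Finite R B] (I : Ideal R) [Finite (R ⧸ I)] : Finite (B ⧸ I.map (algebraMap R B)) :=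
  have : Module.Finite (R ⧸ I) (B ⧸ I.map (algebraMap R B)) :=
    Module.Finite.of_restrictScalars_finite R _ _
  Module.finite_of_finite (R ⧸ I)

namespace PadicInt

variable {p : ℕ} [Fact p.Prime] {B : Type*} [CommRing B] [Algebra ℤ_[p] B]

theorem finite_quotient_span_p [Module.Finite ℤ_[p] B] :
    Finite (B ⧸ Ideal.span {(p : B)}) := by
  have : Finite (ℤ_[p] ⧸ Ideal.span {(p : ℤ_[p])}) := by
    rw [← maximalIdeal_eq_span_p]
    exact Finite.of_equiv _ residueField.symm.toEquiv
  have := finite_quotient_map (B := B) (Ideal.span {(p : ℤ_[p])})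
  rwa [Ideal.map_span, Set.image_singleton, map_natCast] at this

theorem span_p_le_of_isMaximal [Algebra.IsIntegral ℤ_[p] B] (𝔞 : Ideal B) [𝔞.IsMaximal] :
    Ideal.span {(p : B)} ≤ 𝔞 := by
  have h := eq_maximalIdeal (Ideal.isMaximal_comap_of_isIntegral_of_isMaximal (R := ℤ_[p]) 𝔞)
  have : (p : ℤ_[p]) ∈ 𝔞.comap (algebraMap ℤ_[p] B) := by
    rw [h, maximalIdeal_eq_span_p]
    exact Ideal.mem_span_singleton_self _
  simpa using this

end PadicInt

theorem dim_of_hecke_eigenspace_general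
    (B : Type) [CommRing B] [Algebra ℤ_[2] B] [Module.Finite ℤ_[2] B]
    (A : Subalgebra ℤ_[2] B) (𝔪 : Ideal A) (h𝔪 : 𝔪.IsMaximal)
    (Λ : Submodule (AlgebraicClosure (ZMod 2)) (B →+ AlgebraicClosure (ZMod 2)))
    (hΛ : ∀ φ : B →+ AlgebraicClosure (ZMod 2),
      φ ∈ Λ ↔ ∃ K : ℕ, ∀ a ∈ 𝔪 ^ K, ∀ b : B, φ ((a : B) * b) = 0) :
    Module.finrank (AlgebraicClosure (ZMod 2)) Λ =
      ∑ᶠ 𝔞 : {𝔞 : Ideal B // 𝔞.IsMaximal ∧ 𝔞.comap (algebraMap A B) = 𝔪},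
        haveI : 𝔞.1.IsPrime := 𝔞.2.1.isPrime
        Nat.log 2 (Nat.card
          (Localization.AtPrime 𝔞.1 ⧸
            (Ideal.span {(2 : Localization.AtPrime 𝔞.1)}))) := by
  set I : Ideal B := Ideal.span {((2 : ℕ) : B)}
  have : Finite (B ⧸ I) := PadicInt.finite_quotient_span_p
  obtain ⟨m, hm⟩ := I.exists_sup_pow_le_sup_pow (𝔪.map (algebraMap A B))
  set J := I ⊔ 𝔪.map (algebraMap A B) ^ (m + 1)
  have hJ := hm (m + 1) m.le_succ
  have : Finite (B ⧸ J) := Finite.of_surjective _ (Ideal.Quotient.factor_surjective le_sup_left)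
  have h2 : ((2 : ℕ) : B ⧸ J) = 0 := by
    rw [← map_natCast (Ideal.Quotient.mk J), Ideal.Quotient.eq_zero_iff_mem]
    exact Ideal.mem_sup_left (Ideal.mem_span_singleton_self _)
  have hΛJ (φ : B →+ AlgebraicClosure (ZMod 2)) : φ ∈ Λ ↔ J.toAddSubgroup ≤ φ.ker :=
    (hΛ φ).trans <| exists_forall_pow_mul_eq_zero_iff _ hJ <|
      Ideal.span_natCast_toAddSubgroup_le_ker
        (fun x => by rw [nsmul_eq_mul, CharP.cast_eq_zero, zero_mul]) φ
  let e := (MaximalSpectrum.quotientEquiv J).trans <| Equiv.subtypeEquivRight fun 𝔞 =>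
    and_congr_right fun h𝔞 => I.sup_map_pow_le_iff_comap_eq _ h𝔪 h𝔞
      (PadicInt.span_p_le_of_isMaximal 𝔞) m.succ_ne_zero
  rw [finrank_eq_log_card_quotient 2 _ J h2 Λ hΛJ, log_card_eq_finsum_localization 2 h2,
    ← finsum_comp_equiv e]
  have : IsNoetherianRing B := isNoetherian_of_tower ℤ_[2] inferInstance
  refine finsum_congr fun 𝔫 => congrArg _ (Nat.card_congr ?_)
  have hP := (Ideal.map_le_iff_comap_eq_of_isMaximal _ h𝔪 (e 𝔫).2.1.ne_top).2 (e 𝔫).2.2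
  have hI : I.map (algebraMap B (Localization.AtPrime (𝔫.asIdeal.comap (Ideal.Quotient.mk J)))) =
      Ideal.span {2} := by
    rw [Ideal.map_span, Set.image_singleton, map_natCast, Nat.cast_ofNat]
  exact ((Localization.AtPrime.quotientSupPowEquiv (le_sup_right.trans (hJ _)) 𝔫.asIdeal hP).trans
    (Ideal.quotEquivOfEq hI)).toEquiv

/-- Let `B` be a commutative ring, finite and free over `ℤ₂`, `A ⊆ B` a `ℤ₂`-subalgebra and
`𝔪` a maximal ideal of `A`.  The space `Λ` of `ℤ₂`-module maps `φ : B → F̄₂` (equivalently,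
additive maps, since any such map kills `2B`) killed by some power of `𝔪` has `F̄₂`-dimension
`Σ_𝔞 dim_{𝔽₂} (B_𝔞 / 2 B_𝔞) = Σ_𝔞 [k_𝔞 : 𝔽₂]·dim_{k_𝔞}(B_𝔞/2B_𝔞)`, the sum being over the
maximal ideals `𝔞` of `B` lying over `𝔪`.  (Here `dim_{𝔽₂}` of a finite `𝔽₂`-vector space is
written as `Nat.log 2` of its cardinality.) -/
theorem dim_of_hecke_eigenspace
    (B : Type) [CommRing B] [Algebra ℤ_[2] B] [Module.Free ℤ_[2] B] [Module.Finite ℤ_[2] B]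
    (A : Subalgebra ℤ_[2] B) (𝔪 : Ideal A) (h𝔪 : 𝔪.IsMaximal)
    (Λ : Submodule (AlgebraicClosure (ZMod 2)) (B →+ AlgebraicClosure (ZMod 2)))
    (hΛ : ∀ φ : B →+ AlgebraicClosure (ZMod 2),
      φ ∈ Λ ↔ ∃ K : ℕ, ∀ a ∈ 𝔪 ^ K, ∀ b : B, φ ((a : B) * b) = 0) :
    Module.finrank (AlgebraicClosure (ZMod 2)) Λ =
      ∑ᶠ 𝔞 : {𝔞 : Ideal B // 𝔞.IsMaximal ∧ 𝔞.comap (algebraMap A B) = 𝔪},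
        haveI : 𝔞.1.IsPrime := 𝔞.2.1.isPrime
        Nat.log 2 (Nat.card
          (Localization.AtPrime 𝔞.1 ⧸
            (Ideal.span {(2 : Localization.AtPrime 𝔞.1)}))) :=
  dim_of_hecke_eigenspace_general B A 𝔪 h𝔪 Λ hΛ
end

section
/- Let (R, 𝔪) be a commutative local ring, let M be a free R-module of rank 2, and let T : M → M be an R-linear endomorphism such that (T − id)² = 0 and such that the induced endomorphism of M/𝔪M is not the identity. Then there exists an R-basis (e₁, e₂) of M with T(e₁) = e₁ and T(e₂) = e₁ + e₂; that is, in this basis T has matrix [[1, 1], [0, 1]]. -/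
/-!
Put `N = T - id` and pick `m` with `N m ∉ 𝔪M`. Over the residue field, `N² = 0` and `N m ≠ 0`
force `N m, m` to be linearly independent in the two-dimensional space `k ⊗ M`, hence a basis
of it; by Nakayama `N m, m` span `M`, and two generators of a free module of rank two form a
basis. In it `T (N m) = N m + N² m = N m` and `T m = N m + m`.
-/

open IsLocalRing TensorProduct Module Submodule

lemma LinearIndependent.pair_apply_self_of_apply_apply_eq_zero {K V : Type*} [DivisionRing K]
    [AddCommGroup V] [Module K V] {N : V →ₗ[K] V} {x : V} (hNN : N (N x) = 0) (hN : N x ≠ 0) :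
    LinearIndependent K ![N x, x] := by
  rw [LinearIndependent.pair_iff]
  intro s t h
  have ht : t = 0 := by
    simpa [hNN, hN] using congrArg N h
  subst ht
  simpa [hN] using h

section

variable {R M : Type*} [CommRing R] [IsLocalRing R] [AddCommGroup M] [Module R M]

lemma IsLocalRing.one_tmul_residueField_eq_zero_iff (x : M) :
    (1 : ResidueField R) ⊗ₜ[R] x = 0 ↔ x ∈ maximalIdeal R • (⊤ : Submodule R M) := by
  rw [← LinearMap.ker_tensorProductMk]
  rfl

lemma IsLocalRing.span_eq_top_of_linearIndependent_one_tmul [Module.Free R M] [Module.Finite R M]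
    {ι : Type*} [Fintype ι] {v : ι → M}
    (hv : LinearIndependent (ResidueField R) fun i ↦ (1 : ResidueField R) ⊗ₜ[R] v i)
    (hcard : Fintype.card ι = finrank R M) :
    span R (Set.range v) = ⊤ := by
  rw [← map_tensorProduct_mk_eq_top, map_span, ← Set.range_comp,
    ← restrictScalars_span R (ResidueField R) residue_surjective, restrictScalars_eq_top_iff]
  exact hv.span_eq_top_of_card_eq_finrank' (by rw [hcard, finrank_baseChange])

end

/-- If `M` is a free module of rank 2 over a local ring `(R, 𝔪)` and `T : M → M` satisfies
`(T − id)² = 0` while the induced endomorphism of `M/𝔪M` is not the identity, then there is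
a basis `(e₁, e₂)` of `M` in which `T` has matrix `[[1,1],[0,1]]`. -/
theorem unipotent_matrix_form_over_local_ring
    (R : Type) [CommRing R] [IsLocalRing R]
    (M : Type) [AddCommGroup M] [Module R M]
    (b₀ : Module.Basis (Fin 2) R M)
    (T : M →ₗ[R] M)
    (hT : (T - LinearMap.id) ∘ₗ (T - LinearMap.id) = 0)
    (hred : ∃ m : M, T m - m ∉ (IsLocalRing.maximalIdeal R) • (⊤ : Submodule R M)) :
    ∃ b : Module.Basis (Fin 2) R M, T (b 0) = b 0 ∧ T (b 1) = b 0 + b 1 := by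
  obtain ⟨m, hm⟩ := hred
  have : Module.Free R M := .of_basis b₀
  have : Module.Finite R M := .of_basis b₀
  set N := T - LinearMap.id
  have hNN : ∀ x, N (N x) = 0 := LinearMap.congr_fun hT
  have hli : LinearIndependent (ResidueField R)
      fun i ↦ (1 : ResidueField R) ⊗ₜ[R] ![N m, m] i := by
    have := LinearIndependent.pair_apply_self_of_apply_apply_eq_zero
      (N := N.baseChange (ResidueField R)) (x := 1 ⊗ₜ m) (by simp [hNN])
      (by rwa [LinearMap.baseChange_tmul, Ne, one_tmul_residueField_eq_zero_iff])
    -- the `AddCommMonoid` instances on `k ⊗ M` differ syntactically (via `AddCommGroup` or not)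
    convert this using 1
    · ext i
      fin_cases i <;> rfl
    · rfl
  have hcard : Fintype.card (Fin 2) = finrank R M := (finrank_eq_card_basis b₀).symm
  refine ⟨basisOfTopLeSpanOfCardEqFinrank ![N m, m]
    (span_eq_top_of_linearIndependent_one_tmul hli hcard).ge hcard, ?_, ?_⟩
  · simpa [N, sub_eq_zero] using hNN m
  · simp [N]
end
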